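/- arXiv:2510.15128 — 3 statements merged into one kernel-verified Lean document; each statement's English description precedes it below -/
import Mathlib

section
/- For any events H and E in a probability space with 0 < P(E) < 1, the excess content of H beyond E, represented by the event H ∪ Eᶜ, receives nonpositive support from E: in fact P(H ∪ Eᶜ | E) − P(H ∪ Eᶜ) = P(Eᶜ)·(P(H|E) − 1) ≤ 0. -/
open MeasureTheory

/-- Popper–Miller: the excess content `H ∪ Eᶜ` of `H` beyond `E` receives nonpositive
support from `E`: `P(H ∪ Eᶜ | E) − P(H ∪ Eᶜ) = P(Eᶜ)·(P(H|E) − 1) ≤ 0`. -/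
theorem popper_miller_excess_nonpositive
    {Ω : Type*} [MeasurableSpace Ω] (P : Measure Ω) [IsProbabilityMeasure P]
    (H E : Set Ω) (hH : MeasurableSet H) (hE : MeasurableSet E)
    (hE0 : 0 < (P E).toReal) (hE1 : (P E).toReal < 1) :
    (P ((H ∪ Eᶜ) ∩ E)).toReal / (P E).toReal - (P (H ∪ Eᶜ)).toReal
        = (P Eᶜ).toReal * ((P (H ∩ E)).toReal / (P E).toReal - 1)
      ∧ (P ((H ∪ Eᶜ) ∩ E)).toReal / (P E).toReal - (P (H ∪ Eᶜ)).toReal ≤ 0 := by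
  have hHE : (H ∪ Eᶜ) ∩ E = H ∩ E := by
    ext x; by_cases hx : x ∈ E <;> simp [hx]
  have hset : H ∪ Eᶜ = (H ∩ E) ∪ Eᶜ := by
    ext x; by_cases hx : x ∈ E <;> simp [hx]
  have hdisj : Disjoint (H ∩ E) Eᶜ := by
    rw [Set.disjoint_left]; rintro x ⟨_, hx⟩ hc; exact hc hx
  have hu : P (H ∪ Eᶜ) = P (H ∩ E) + P Eᶜ := by
    rw [hset, measure_union hdisj hE.compl]
  have hc : (P Eᶜ).toReal = 1 - (P E).toReal := by
    rw [measure_compl hE (measure_ne_top _ _),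
      ENNReal.toReal_sub_of_le (measure_mono (Set.subset_univ _)) (measure_ne_top _ _)]
    simp
  have hle : (P (H ∩ E)).toReal ≤ (P E).toReal :=
    ENNReal.toReal_mono (measure_ne_top _ _) (measure_mono Set.inter_subset_right)
  have ha : 0 ≤ (P (H ∩ E)).toReal := ENNReal.toReal_nonneg
  have hur : (P (H ∪ Eᶜ)).toReal = (P (H ∩ E)).toReal + (P Eᶜ).toReal := by
    rw [hu, ENNReal.toReal_add (measure_ne_top _ _) (measure_ne_top _ _)]
  rw [hHE, hur, hc]
  constructor
  · field_simp
    ring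
  · have h1 : (P (H ∩ E)).toReal / (P E).toReal ≤ 1 := by
      rw [div_le_one hE0]; exact hle
    have h2 : (P (H ∩ E)).toReal / (P E).toReal * (P E).toReal = (P (H ∩ E)).toReal :=
      div_mul_cancel₀ _ hE0.ne'
    nlinarith [mul_le_mul_of_nonneg_left h1 (by linarith : (0:ℝ) ≤ 1 - (P E).toReal)]
end

section
/- For any events H and E in a probability space with 0 < P(E) < 1, the support of E for H is exactly the sum of the support of E for the deductively shared content H ∪ E and the support of E for the excess content H ∪ Eᶜ: (P(H|E) − P(H)) = (P(H ∪ E | E) − P(H ∪ E)) + (P(H ∪ Eᶜ | E) − P(H ∪ Eᶜ)). -/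
open MeasureTheory

/-- Popper–Miller: the support of `E` for `H` is the sum of the support of `E` for the
deductively shared content `H ∪ E` and the support of `E` for the excess content `H ∪ Eᶜ`. -/
theorem popper_miller_support_splits
    {Ω : Type*} [MeasurableSpace Ω] (P : Measure Ω) [IsProbabilityMeasure P]
    (H E : Set Ω) (hH : MeasurableSet H) (hE : MeasurableSet E)
    (hE0 : 0 < (P E).toReal) (hE1 : (P E).toReal < 1) :
    (P (H ∩ E)).toReal / (P E).toReal - (P H).toReal
      = ((P ((H ∪ E) ∩ E)).toReal / (P E).toReal - (P (H ∪ E)).toReal)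
        + ((P ((H ∪ Eᶜ) ∩ E)).toReal / (P E).toReal - (P (H ∪ Eᶜ)).toReal) := by
  have h1 : (H ∪ E) ∩ E = E := by
    ext x; simp [Set.mem_union, Set.mem_inter_iff]; tauto
  have h2 : (H ∪ Eᶜ) ∩ E = H ∩ E := by
    ext x; simp [Set.mem_union, Set.mem_inter_iff]; tauto
  rw [h1, h2]
  have fin : ∀ s : Set Ω, P s ≠ ⊤ := fun s => measure_ne_top P s
  -- inclusion-exclusion facts in ℝ
  have hu1 : P (H ∪ E) + P (H ∩ E) = P H + P E :=
    measure_union_add_inter H hE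
  have hu2 : P (H ∪ Eᶜ) + P (H ∩ Eᶜ) = P H + P Eᶜ :=
    measure_union_add_inter H hE.compl
  have hsplit : P (H ∩ E) + P (H ∩ Eᶜ) = P H := by
    have := measure_inter_add_diff H hE (μ := P)
    simpa [Set.diff_eq] using this
  have hcompl : P E + P Eᶜ = 1 := by
    simpa using measure_add_measure_compl hE (μ := P)
  have tr : ∀ a b c d : ENNReal, a ≠ ⊤ → b ≠ ⊤ → c ≠ ⊤ → d ≠ ⊤ →
      a + b = c + d → (a).toReal + (b).toReal = (c).toReal + (d).toReal := by
    intro a b c d ha hb hc hd h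
    rw [← ENNReal.toReal_add ha hb, ← ENNReal.toReal_add hc hd, h]
  have r1 := tr _ _ _ _ (fin _) (fin _) (fin _) (fin _) hu1
  have r2 := tr _ _ _ _ (fin _) (fin _) (fin _) (fin _) hu2
  have r3 : (P (H ∩ E)).toReal + (P (H ∩ Eᶜ)).toReal = (P H).toReal := by
    rw [← ENNReal.toReal_add (fin _) (fin _), hsplit]
  have r4 : (P E).toReal + (P Eᶜ).toReal = 1 := by
    rw [← ENNReal.toReal_add (fin _) (fin _), hcompl]; simp
  have he : (P E).toReal / (P E).toReal = 1 := div_self (ne_of_gt hE0)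
  rw [he]
  linarith
end

section
/- For any events H and E in a probability space with 0 < P(E) < 1 and P(H|E) < 1 (E does not render H certain), the excess content H ∪ Eᶜ receives strictly negative support from E: P(H ∪ Eᶜ | E) < P(H ∪ Eᶜ). Moreover equality P(H ∪ Eᶜ | E) = P(H ∪ Eᶜ) holds if and only if P(H|E) = 1. -/
open MeasureTheory

/-- Popper–Miller: if `E` does not render `H` certain (`P(H|E) < 1`), then the excess
content `H ∪ Eᶜ` receives strictly negative support from `E`; and in general (for
`0 < P(E) < 1`) equality `P(H ∪ Eᶜ | E) = P(H ∪ Eᶜ)` holds iff `P(H|E) = 1`. -/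
theorem popper_miller_excess_strict
    {Ω : Type*} [MeasurableSpace Ω] (P : Measure Ω) [IsProbabilityMeasure P]
    (H E : Set Ω) (hH : MeasurableSet H) (hE : MeasurableSet E)
    (hE0 : 0 < (P E).toReal) (hE1 : (P E).toReal < 1) :
    ((P (H ∩ E)).toReal / (P E).toReal < 1 →
        (P ((H ∪ Eᶜ) ∩ E)).toReal / (P E).toReal < (P (H ∪ Eᶜ)).toReal)
      ∧ ((P ((H ∪ Eᶜ) ∩ E)).toReal / (P E).toReal = (P (H ∪ Eᶜ)).toReal
          ↔ (P (H ∩ E)).toReal / (P E).toReal = 1) := by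
  have hset : (H ∪ Eᶜ) ∩ E = H ∩ E := by
    ext x; simp [Set.mem_inter_iff, Set.mem_union]; tauto
  have hset2 : H ∪ Eᶜ = (H ∩ E) ∪ Eᶜ := by
    ext x; simp [Set.mem_inter_iff, Set.mem_union]; tauto
  have hdisj : Disjoint (H ∩ E) Eᶜ := by
    apply Set.disjoint_left.mpr; intro x hx hxc; exact hxc hx.2
  have hunion : P (H ∪ Eᶜ) = P (H ∩ E) + P Eᶜ := by
    rw [hset2, measure_union hdisj hE.compl]
  have hcompl : (P Eᶜ).toReal = 1 - (P E).toReal := by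
    rw [prob_compl_eq_one_sub hE]
    rw [ENNReal.toReal_sub_of_le (prob_le_one) ENNReal.one_ne_top]
    simp
  have hfin1 : P (H ∩ E) ≠ ⊤ := measure_ne_top P _
  have hfin2 : P Eᶜ ≠ ⊤ := measure_ne_top P _
  have hU : (P (H ∪ Eᶜ)).toReal = (P (H ∩ E)).toReal + 1 - (P E).toReal := by
    rw [hunion, ENNReal.toReal_add hfin1 hfin2, hcompl]; ring
  rw [hset, hU]
  set x := (P (H ∩ E)).toReal
  set e := (P E).toReal
  have hxe : x ≤ e := by
    apply ENNReal.toReal_mono (measure_ne_top P _)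
    exact measure_mono Set.inter_subset_right
  constructor
  · intro h
    have hx : x < e := by
      by_contra hc
      push_neg at hc
      have : x = e := le_antisymm hxe hc
      rw [this, div_self (ne_of_gt hE0)] at h
      exact lt_irrefl 1 h
    rw [div_lt_iff₀ hE0]
    nlinarith
  · constructor
    · intro h
      rw [div_eq_iff (ne_of_gt hE0)] at h
      have : x = e := by nlinarith
      rw [this, div_self (ne_of_gt hE0)]
    · intro h
      rw [div_eq_one_iff_eq (ne_of_gt hE0)] at h
      rw [h, div_self (ne_of_gt hE0)]
      nlinarith
end
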